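/- arXiv:1106.5463 — 6 statements merged into one kernel-verified Lean document; each statement's English description precedes it below -/
import Mathlib

section
/- Every tournament T has a vertex v with the second neighborhood property, i.e., |N^+(v)| ≤ |N^{++}(v)|. -/
variable {V : Type*}

/-- Out-neighborhood of `v`. -/
def Nplus (A : V → V → Prop) (v : V) : Set V := {u | A v u}

/-- In-neighborhood of `v`. -/
def Nminus (A : V → V → Prop) (v : V) : Set V := {u | A u v}

/-- Second out-neighborhood: vertices at directed distance exactly 2 from `v`. -/
def Npp (A : V → V → Prop) (v : V) : Set V :=
  {u | u ≠ v ∧ ¬ A v u ∧ ∃ w, A v w ∧ A w u}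

/-- The second neighborhood property. -/
def SNP (A : V → V → Prop) (v : V) : Prop := (Nplus A v).ncard ≤ (Npp A v).ncard

/-- A digraph (given by its arc relation) has no digons: no 2-cycles (this also rules out loops when stated for `u = v`). -/
def NoDigons (A : V → V → Prop) : Prop := ∀ u v, ¬ (A u v ∧ A v u)

/-- A tournament: an orientation of a complete graph. -/
def IsTournament (A : V → V → Prop) : Prop :=
  (∀ v, ¬ A v v) ∧ ∀ u v : V, u ≠ v → (A u v ↔ ¬ A v u)

/-- `u v` is a missing edge: distinct and non-adjacent. -/
def MissingEdge (A : V → V → Prop) (u v : V) : Prop := u ≠ v ∧ ¬ A u v ∧ ¬ A v u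

/-- `x₁y₁` loses to `x₂y₂` (with this labelling of endpoints). -/
def LosesAt (A : V → V → Prop) (x₁ y₁ x₂ y₂ : V) : Prop :=
  A x₁ x₂ ∧ ¬ A x₁ y₂ ∧ y₂ ∉ Npp A x₁ ∧ A y₁ y₂ ∧ ¬ A y₁ x₂ ∧ x₂ ∉ Npp A y₁

/-- The losing relation between (unordered) missing edges: the arcs of the dependency digraph. -/
def EdgeLoses (A : V → V → Prop) (e e' : Sym2 V) : Prop :=
  ∃ x₁ y₁ x₂ y₂, e = s(x₁, y₁) ∧ e' = s(x₂, y₂) ∧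
    MissingEdge A x₁ y₁ ∧ MissingEdge A x₂ y₂ ∧ LosesAt A x₁ y₁ x₂ y₂

/-! Following Havet and Thomassé, the last vertex `v` of a local median order (an ordering
maximising the number of forward arcs) has the second neighbourhood property. By the feedback
property, `v` has at least as many in-neighbours as out-neighbours before it, and an in-neighbour
beaten by some out-neighbour of `v` lies in `N⁺⁺(v)`. If some in-neighbour `s` beats all of
`N⁺(v)`, take the first one: the vertices before `s` are handled by the feedback property at `s`
(every out-neighbour of `v` there is an out-neighbour of `s`, every in-neighbour of `s` there is
in `N⁺⁺(v)`), and the vertices after `s` by induction. -/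

open Classical

theorem Set.ncard_eq_countP_of_nodup {α : Type*} {s : Set α} {l : List α} (hl : l.Nodup)
    (hs : ∀ a ∈ s, a ∈ l) : s.ncard = l.countP (· ∈ s) := by
  rw [List.countP_eq_length_filter, ← List.toFinset_card_of_nodup (hl.filter _),
    ← Set.ncard_coe_finset]
  congr
  ext a
  simpa using fun ha => hs a ha

section Tournament

variable {A : V → V → Prop}

theorem IsTournament.asymm (hT : IsTournament A) {u v : V} (huv : A u v) : ¬ A v u := by
  obtain rfl | hne := eq_or_ne u v
  · exact hT.1 u
  · exact (hT.2 u v hne).1 huv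

theorem IsTournament.arc_of_not_arc (hT : IsTournament A) {u v : V} (hne : u ≠ v)
    (hvu : ¬ A v u) : A u v :=
  (hT.2 u v hne).2 hvu

theorem IsTournament.mem_Npp (hT : IsTournament A) {u v w : V} (huv : A u v) (hvw : A v w)
    (hwu : A w u) : u ∈ Npp A v :=
  ⟨fun h => hT.1 v (h ▸ huv), hT.asymm huv, w, hvw, hwu⟩

end Tournament

section LocalMedianOrder

variable (A : V → V → Prop)

noncomputable def forwardArcs : List V → ℕ
  | [] => 0
  | x :: l => l.countP (A x ·) + forwardArcs l

theorem forwardArcs_append_add_of_perm (t : List V) {l l' : List V} (h : l.Perm l') :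
    forwardArcs A (t ++ l) + forwardArcs A l' = forwardArcs A (t ++ l') + forwardArcs A l := by
  induction t with
  | nil => exact Nat.add_comm _ _
  | cons y t ih =>
    simp only [List.cons_append, forwardArcs, List.countP_append, h.countP_eq]
    omega

theorem forwardArcs_append_cons_add (p q : List V) (x : V) :
    forwardArcs A (p ++ x :: q) + p.countP (A x ·) =
      forwardArcs A (x :: (p ++ q)) + p.countP (A · x) := by
  induction p with
  | nil => simp
  | cons y p ih =>
    simp only [List.cons_append, forwardArcs, List.countP_cons, List.countP_append] at ih ⊢
    omega

/-- Only the half of the feedback property of a local median order that the argument needs. -/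
def IsLocalMedianOrder (l : List V) : Prop :=
  ∀ ⦃p : List V⦄ ⦃x : V⦄, p ++ [x] <:+: l → p.countP (A x ·) ≤ p.countP (A · x)

/-- Moving `x` in front of the interval `p` preceding it gains `#in - #out` forward arcs, so a
permutation with the most forward arcs will do. -/
theorem exists_perm_isLocalMedianOrder (l : List V) :
    ∃ m, m.Perm l ∧ IsLocalMedianOrder A m := by
  obtain ⟨m, hm, hmax⟩ :=
    l.permutations.toFinset.exists_max_image (forwardArcs A) ⟨l, by simp⟩
  rw [List.mem_toFinset, List.mem_permutations] at hm
  refine ⟨m, hm, fun p x ⟨t, q, htq⟩ => ?_⟩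
  have hm_eq : m = t ++ (p ++ x :: q) := by simp [← htq]
  have hmoved : (t ++ x :: (p ++ q)).Perm l :=
    (List.perm_middle.symm.append_left t).trans (hm_eq ▸ hm)
  have hle := hmax _ (by simpa [List.mem_permutations] using hmoved)
  have hswap := forwardArcs_append_cons_add A p q x
  have hprefix :=
    forwardArcs_append_add_of_perm A t (List.perm_middle (l₁ := p) (a := x) (l₂ := q))
  rw [hm_eq] at hle
  omega

variable {A}

theorem IsLocalMedianOrder.mono {l l' : List V} (hl : IsLocalMedianOrder A l) (h : l' <:+: l) :
    IsLocalMedianOrder A l' :=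
  fun _ _ hpx => hl (hpx.trans h)

theorem IsLocalMedianOrder.countP_out_le {l p : List V} {x : V} {P : V → Prop}
    (hl : IsLocalMedianOrder A l) (hpx : p ++ [x] <:+: l) (hP : ∀ u ∈ p, A u x → P u) :
    p.countP (A x ·) ≤ p.countP P :=
  (hl hpx).trans (List.countP_mono_left fun u hu h => by simpa using hP u hu (by simpa using h))

theorem IsLocalMedianOrder.countP_out_le_countP_Npp (hT : IsTournament A) {p : List V} {v : V}
    (hl : IsLocalMedianOrder A (p ++ [v])) : p.countP (A v ·) ≤ p.countP (· ∈ Npp A v) := by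
  by_cases hbad : ∃ s ∈ p, A s v ∧ ∀ w, A v w → ¬ A w s
  · obtain ⟨s, hfind⟩ := Option.isSome_iff_exists.1 <| List.find?_isSome
      (p := fun s => decide (A s v ∧ ∀ w, A v w → ¬ A w s)).2 (by simpa using hbad)
    obtain ⟨hs, p₁, p₂, rfl, hfirst⟩ := List.find?_eq_some_iff_append.1 hfind
    obtain ⟨hsv, hs⟩ := of_decide_eq_true hs
    have hvs : ¬ A v s := hT.asymm hsv
    have hbefore_out : p₁.countP (A v ·) ≤ p₁.countP (A s ·) :=
      List.countP_mono_left fun u _ hvu => by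
        simp only [decide_eq_true_eq] at hvu ⊢
        exact hT.arc_of_not_arc (by rintro rfl; exact hvs hvu) (hs u hvu)
    have hbefore_in : p₁.countP (A s ·) ≤ p₁.countP (· ∈ Npp A v) :=
      hl.countP_out_le
        (by simpa using (List.prefix_append (p₁ ++ [s]) (p₂ ++ [v])).isInfix) fun u hu hus => by
        have huv : A u v :=
          hT.arc_of_not_arc (by rintro rfl; exact hvs hus) fun hvu => hs u hvu hus
        obtain ⟨w, hvw, hwu⟩ : ∃ w, A v w ∧ A w u := by simpa [huv] using hfirst u hu
        exact hT.mem_Npp huv hvw hwu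
    have hafter : p₂.countP (A v ·) ≤ p₂.countP (· ∈ Npp A v) :=
      countP_out_le_countP_Npp hT
        (hl.mono (by simpa using (List.suffix_append (p₁ ++ [s]) (p₂ ++ [v])).isInfix))
    simp only [List.countP_append, List.countP_cons, hvs, decide_false, Bool.false_eq_true,
      if_false]
    omega
  · push Not at hbad
    exact hl.countP_out_le (List.infix_refl _) fun u hu huv => by
      obtain ⟨w, hvw, hwu⟩ := hbad u hu huv
      exact hT.mem_Npp huv hvw hwu
termination_by p.length

end LocalMedianOrder

/-- Every tournament has a vertex with the second neighborhood property. -/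
theorem every_tournament_has_SNP_vertex [Fintype V] [Nonempty V]
    (A : V → V → Prop) (hT : IsTournament A) :
    ∃ v : V, SNP A v := by
  obtain ⟨l, hperm, hl⟩ := exists_perm_isLocalMedianOrder A (Finset.univ : Finset V).toList
  have hnd : l.Nodup := hperm.nodup_iff.2 (Finset.nodup_toList _)
  have hmem (u : V) : u ∈ l := hperm.mem_iff.2 (Finset.mem_toList.2 (Finset.mem_univ u))
  obtain ⟨p, v, rfl⟩ : ∃ p v, l = p ++ [v] := by
    rcases l.eq_nil_or_concat with rfl | ⟨p, v, rfl⟩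
    · exact absurd (hmem (Classical.arbitrary V)) List.not_mem_nil
    · exact ⟨p, v, List.concat_eq_append ..⟩
  refine ⟨v, ?_⟩
  have hv : v ∉ Nplus A v ∧ v ∉ Npp A v := ⟨hT.1 v, fun h => h.1 rfl⟩
  rw [SNP, Set.ncard_eq_countP_of_nodup hnd fun u _ => hmem u,
    Set.ncard_eq_countP_of_nodup hnd fun u _ => hmem u]
  have hout : p.countP (· ∈ Nplus A v) ≤ p.countP (· ∈ Npp A v) :=
    hl.countP_out_le_countP_Npp hT
  simpa [List.countP_append, hv] using hout
end

section
/- Let (D, ω) be a nonnegatively weighted digraph and L = v_1...v_n a weighted local median order of (D, ω) (an order satisfying the feedback property). If L has no bad vertex, then ω(N^+(v_n)) ≤ ω(G_L), where G_L is the set of good vertices of L; in particular v_n has the weighted SNP since G_L ⊆ N^{++}(v_n). -/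
/-!
Applying the feedback property to the whole order `[1, n]` at its last vertex gives
`ω(N⁺(vₙ)) ≤ ω(N⁻(vₙ))`. Since there are no digons, an in-neighbour of `vₙ` is neither `vₙ`
nor an out-neighbour of it, so, as no vertex is bad, it is good; and a good vertex is reached
from `vₙ` by a path `vₙ → vᵢ → vⱼ` without being an out-neighbour, i.e. lies in `N⁺⁺(vₙ)`.
-/

variable {V : Type*}

/-- An order of the vertices satisfying the (weighted) feedback property. -/
def FeedbackOrder {n : ℕ} (A : V → V → Prop) (ω : V → ℝ) (L : Fin n ≃ V) : Prop :=
  ∀ i j : Fin n, i ≤ j →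
    (∑ᶠ k ∈ {k : Fin n | i ≤ k ∧ k ≤ j ∧ A (L k) (L i)}, ω (L k)) ≤
      (∑ᶠ k ∈ {k : Fin n | i ≤ k ∧ k ≤ j ∧ A (L i) (L k)}, ω (L k)) ∧
    (∑ᶠ k ∈ {k : Fin n | i ≤ k ∧ k ≤ j ∧ A (L j) (L k)}, ω (L k)) ≤
      (∑ᶠ k ∈ {k : Fin n | i ≤ k ∧ k ≤ j ∧ A (L k) (L j)}, ω (L k))

/-- The set of good vertices of an order with last (feed) vertex `L last`:
vertices `v = L j` other than the feed vertex, not out-neighbors of the feed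
vertex, such that `L last → L i → L j` for some `i ≤ j`. -/
def goodSet {n : ℕ} (A : V → V → Prop) (L : Fin n ≃ V) (last : Fin n) : Set V :=
  {v | v ≠ L last ∧ ¬ A (L last) v ∧
    ∃ i j : Fin n, i ≤ j ∧ L j = v ∧ A (L last) (L i) ∧ A (L i) v}

theorem finsum_mem_le_finsum_mem_of_subset {M : Type*} [AddCommMonoid M] [PartialOrder M]
    [IsOrderedAddMonoid M] {f : V → M} {s t : Set V} (ht : t.Finite) (hst : s ⊆ t)
    (hf : ∀ v ∈ t \ s, 0 ≤ f v) : (∑ᶠ v ∈ s, f v) ≤ ∑ᶠ v ∈ t, f v := by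
  rw [← finsum_mem_add_sdiff hst ht]
  exact le_add_of_nonneg_right (finsum_nonneg fun v ↦ finsum_nonneg (hf v))

theorem Equiv.finsum_mem_preimage {α M : Type*} [AddCommMonoid M] (e : α ≃ V) (s : Set V)
    (f : V → M) : (∑ᶠ k ∈ e ⁻¹' s, f (e k)) = ∑ᶠ v ∈ s, f v := by
  rw [← finsum_mem_image e.injective.injOn, e.image_preimage]

theorem FeedbackOrder.finsum_Nplus_le_finsum_Nminus {n : ℕ} {A : V → V → Prop} {ω : V → ℝ}
    {L : Fin n ≃ V} (hL : FeedbackOrder A ω L) {last : Fin n} (hlast : ∀ k, k ≤ last) :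
    (∑ᶠ v ∈ Nplus A (L last), ω v) ≤ ∑ᶠ v ∈ Nminus A (L last), ω v := by
  have : NeZero n := ⟨last.pos.ne'⟩
  have hsets : ∀ P : Fin n → Prop, {k | 0 ≤ k ∧ k ≤ last ∧ P k} = {k | P k} := fun P ↦ by
    ext k
    simp [hlast k]
  have hfeedback := (hL 0 last (hlast 0)).2
  rw [hsets, hsets] at hfeedback
  rwa [← L.finsum_mem_preimage, ← L.finsum_mem_preimage]

theorem Nminus_subset_goodSet {n : ℕ} {A : V → V → Prop} (hA : NoDigons A) {L : Fin n ≃ V}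
    {last : Fin n}
    (hNoBad : ∀ j : Fin n, j ≠ last → ¬ A (L last) (L j) → L j ∈ goodSet A L last) :
    Nminus A (L last) ⊆ goodSet A L last := by
  intro v (hv : A v (L last))
  have hne : L.symm v ≠ last := by
    rintro rfl
    exact hA v v ⟨by simpa using hv, by simpa using hv⟩
  simpa using hNoBad (L.symm v) hne (by simpa using fun h ↦ hA _ _ ⟨h, hv⟩)

theorem goodSet_subset_Npp {n : ℕ} (A : V → V → Prop) (L : Fin n ≃ V) (last : Fin n) :
    goodSet A L last ⊆ Npp A (L last) := by
  rintro v ⟨hne, hnotout, i, -, -, -, hlast_i, hi_v⟩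
  exact ⟨hne, hnotout, L i, hlast_i, hi_v⟩

theorem no_bad_vertex_weighted_SNP_general
    (A : V → V → Prop) (hA : NoDigons A)
    (ω : V → ℝ) (hω : ∀ v, 0 ≤ ω v)
    {n : ℕ} (L : Fin n ≃ V) (hL : FeedbackOrder A ω L)
    (last : Fin n) (hlast : (last : ℕ) = n - 1)
    (hNoBad : ∀ j : Fin n, j ≠ last → ¬ A (L last) (L j) → L j ∈ goodSet A L last) :
    (∑ᶠ v ∈ Nplus A (L last), ω v) ≤ (∑ᶠ v ∈ goodSet A L last, ω v) ∧
    goodSet A L last ⊆ Npp A (L last) ∧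
    (∑ᶠ v ∈ Nplus A (L last), ω v) ≤ (∑ᶠ v ∈ Npp A (L last), ω v) := by
  have : Finite V := .of_equiv _ L
  have hmono {s t : Set V} (hst : s ⊆ t) : (∑ᶠ v ∈ s, ω v) ≤ ∑ᶠ v ∈ t, ω v :=
    finsum_mem_le_finsum_mem_of_subset t.toFinite hst fun v _ ↦ hω v
  have hle_last (k : Fin n) : k ≤ last := by
    have := k.isLt
    rw [Fin.le_def, hlast]
    omega
  have hout_le_in := hL.finsum_Nplus_le_finsum_Nminus hle_last
  have hout_le_good := hout_le_in.trans (hmono (Nminus_subset_goodSet hA hNoBad))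
  have hgood := goodSet_subset_Npp A L last
  exact ⟨hout_le_good, hgood, hout_le_good.trans (hmono hgood)⟩

/-- if a weighted local median order has no bad vertex, then
`ω(N⁺(vₙ)) ≤ ω(G_L)`; in particular, since `G_L ⊆ N⁺⁺(vₙ)`, the feed vertex
has the weighted SNP. -/
theorem no_bad_vertex_weighted_SNP [Fintype V]
    (A : V → V → Prop) (hA : NoDigons A)
    (ω : V → ℝ) (hω : ∀ v, 0 ≤ ω v)
    {n : ℕ} (hn : 0 < n) (L : Fin n ≃ V) (hL : FeedbackOrder A ω L)
    (last : Fin n) (hlast : (last : ℕ) = n - 1)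
    (hNoBad : ∀ j : Fin n, j ≠ last → ¬ A (L last) (L j) → L j ∈ goodSet A L last) :
    (∑ᶠ v ∈ Nplus A (L last), ω v) ≤ (∑ᶠ v ∈ goodSet A L last, ω v) ∧
    goodSet A L last ⊆ Npp A (L last) ∧
    (∑ᶠ v ∈ Nplus A (L last), ω v) ≤ (∑ᶠ v ∈ Npp A (L last), ω v) :=
  no_bad_vertex_weighted_SNP_general A hA ω hω L hL last hlast hNoBad
end

section
/- A missing edge ab of a digraph D without digons is good (i.e., admits a convenient orientation) if and only if its in-degree in the dependency digraph Δ of D is zero. -/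
variable {V : Type*}

/-- a missing edge `ab` of a digraph without digons is good
(admits a convenient orientation) iff its in-degree in the dependency digraph
is zero, i.e. no missing edge loses to it. -/
theorem good_missing_edge_iff_indegree_zero [Fintype V]
    (A : V → V → Prop) (hA : NoDigons A)
    (a b : V) (hab : MissingEdge A a b) :
    ((∀ v, v ≠ a → v ≠ b → A v a → (A v b ∨ b ∈ Npp A v)) ∨
     (∀ v, v ≠ a → v ≠ b → A v b → (A v a ∨ a ∈ Npp A v)))
    ↔ ∀ e : Sym2 V, ¬ EdgeLoses A e s(a, b) := by

  obtain ⟨hne, hnab, hnba⟩ := hab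
  have irr : ∀ v, ¬ A v v := fun v h => hA v v ⟨h, h⟩
  constructor
  · rintro h e ⟨x₁, y₁, x₂, y₂, he, he', hm1, hm2, hL⟩
    rw [Sym2.eq_iff] at he'
    rcases he' with ⟨rfl, rfl⟩ | ⟨rfl, rfl⟩
    · obtain ⟨hx1, hx2, hx3, hy1, hy2, hy3⟩ := hL
      rcases h with h | h
      · rcases h x₁ (fun hh => irr a (hh ▸ hx1)) (fun hh => hnba (hh ▸ hx1)) hx1 with h' | h'
        · exact hx2 h'
        · exact hx3 h'
      · rcases h y₁ (fun hh => hnab (hh ▸ hy1)) (fun hh => irr b (hh ▸ hy1)) hy1 with h' | h'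
        · exact hy2 h'
        · exact hy3 h'
    · obtain ⟨hx1, hx2, hx3, hy1, hy2, hy3⟩ := hL
      rcases h with h | h
      · rcases h y₁ (fun hh => irr a (hh ▸ hy1)) (fun hh => hnba (hh ▸ hy1)) hy1 with h' | h'
        · exact hy2 h'
        · exact hy3 h'
      · rcases h x₁ (fun hh => hnab (hh ▸ hx1)) (fun hh => irr b (hh ▸ hx1)) hx1 with h' | h'
        · exact hx2 h'
        · exact hx3 h'
  · intro h
    by_contra hcon
    push_neg at hcon
    obtain ⟨h1, h2⟩ := hcon
    obtain ⟨x, hxa, hxb, hxAa, hx'⟩ := h1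
    obtain ⟨y, hya, hyb, hyAb, hy'⟩ := h2
    obtain ⟨hxnb, hxnpp⟩ := hx'
    obtain ⟨hyna, hynpp⟩ := hy'
    have hxy : x ≠ y := fun hh => hyna (hh ▸ hxAa)
    have hnxy : ¬ A x y := fun hh => hxnpp ⟨Ne.symm hxb, hxnb, y, hh, hyAb⟩
    have hnyx : ¬ A y x := fun hh => hynpp ⟨Ne.symm hya, hyna, x, hh, hxAa⟩
    exact h s(x, y) ⟨x, y, a, b, rfl, rfl, ⟨hxy, hnxy, hnyx⟩, ⟨hne, hnab, hnba⟩,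
      hxAa, hxnb, hxnpp, hyAb, hyna, hynpp⟩
end

section
/- Let D be a digraph without digons missing a matching, and let C = a₁b₁,...,a_kb_k be a directed cycle of its dependency digraph with k odd. Then in the induced subdigraph D[K(C)] on the 2k endpoints: N^+(a₁) = N^-(b₁) = {a₂, b₃, a₄, ..., a_{k-1}, b_k} and N^-(a₁) = N^+(b₁) = {b₂, a₃, b₄, ..., b_{k-1}, a_k}. -/
variable {V : Type*}

/-- Out-neighborhood of `x` in the subdigraph induced on `K`. -/
def NplusIn (A : V → V → Prop) (K : Set V) (x : V) : Set V := {u ∈ K | A x u}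

/-- In-neighborhood of `x` in the subdigraph induced on `K`. -/
def NminusIn (A : V → V → Prop) (K : Set V) (x : V) : Set V := {u ∈ K | A u x}

lemma missingEdge_symm {A : V → V → Prop} {x y : V} (h : MissingEdge A x y) :
    MissingEdge A y x := ⟨h.1.symm, h.2.2, h.2.1⟩

lemma core_lemma (A : V → V → Prop)
    (hMatching : ∀ v x y : V, MissingEdge A v x → MissingEdge A v y → x = y)
    (k : ℕ) (hodd : Odd k) (a b : ℕ → V)
    (hmiss : ∀ i < k, MissingEdge A (a i) (b i))
    (hdist : ∀ i < k, ∀ j < k, i ≠ j → s(a i, b i) ≠ s(a j, b j))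
    (hpath : ∀ i, i + 1 < k → LosesAt A (a i) (b i) (a (i + 1)) (b (i + 1)))
    (hclose : LosesAt A (a (k - 1)) (b (k - 1)) (a 0) (b 0)) :
    ∀ i, 0 < i → i < k →
      (Odd i → A (a 0) (a i) ∧ A (b i) (a 0)) ∧
      (Even i → A (a i) (a 0) ∧ A (a 0) (b i)) := by
  -- distinctness of the 2k endpoints
  have haa : ∀ i, i < k → ∀ j, j < k → i ≠ j → a i ≠ a j := by
    intro i hi j hj hij h
    have hb : b i = b j :=
      hMatching (a i) (b i) (b j) (hmiss i hi) (by rw [h]; exact hmiss j hj)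
    exact hdist i hi j hj hij (by rw [h, hb])
  have hbb : ∀ i, i < k → ∀ j, j < k → i ≠ j → b i ≠ b j := by
    intro i hi j hj hij h
    have ha' : a i = a j := hMatching (b i) (a i) (a j) (missingEdge_symm (hmiss i hi))
      (by rw [h]; exact missingEdge_symm (hmiss j hj))
    exact hdist i hi j hj hij (by rw [ha', h])
  have hab : ∀ i, i < k → ∀ j, j < k → i ≠ j → a i ≠ b j := by
    intro i hi j hj hij h
    have hb : b i = a j := hMatching (a i) (b i) (a j) (hmiss i hi)
      (by rw [h]; exact missingEdge_symm (hmiss j hj))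
    exact hdist i hi j hj hij (by rw [h, hb, Sym2.eq_swap])
  -- adjacency with a 0
  have hadj_aa : ∀ j, 0 < j → j < k → A (a 0) (a j) ∨ A (a j) (a 0) := by
    intro j h0 hj
    by_contra hn
    push_neg at hn
    have hm : MissingEdge A (a 0) (a j) := ⟨haa 0 (h0.trans hj) j hj h0.ne, hn.1, hn.2⟩
    exact hab j hj 0 (h0.trans hj) h0.ne'
      (hMatching (a 0) (b 0) (a j) (hmiss 0 (h0.trans hj)) hm).symm
  have hadj_ab : ∀ j, 0 < j → j < k → A (a 0) (b j) ∨ A (b j) (a 0) := by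
    intro j h0 hj
    by_contra hn
    push_neg at hn
    have hm : MissingEdge A (a 0) (b j) := ⟨hab 0 (h0.trans hj) j hj h0.ne, hn.1, hn.2⟩
    exact hbb 0 (h0.trans hj) j hj h0.ne
      (hMatching (a 0) (b 0) (b j) (hmiss 0 (h0.trans hj)) hm)
  -- forward chain
  have forward : ∀ i, i < k →
      (Odd i → A (b i) (a 0)) ∧ (0 < i → Even i → A (a i) (a 0)) := by
    intro i
    induction i with
    | zero =>
      intro _
      exact ⟨fun h => absurd h (by simp), fun h => absurd h (lt_irrefl 0)⟩
    | succ n ih =>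
      intro hn1
      have hnk : n < k := Nat.lt_of_succ_lt hn1
      have hp := hpath n hn1
      constructor
      · intro ho1
        have hne : Even n := by rcases ho1 with ⟨m, hm⟩; exact ⟨m, by omega⟩
        rcases Nat.eq_zero_or_pos n with h0 | h0
        · subst h0
          exact (hadj_ab 1 Nat.one_pos hn1).resolve_left hp.2.1
        · have han : A (a n) (a 0) := (ih hnk).2 h0 hne
          refine (hadj_ab (n + 1) (Nat.succ_pos n) hn1).resolve_left fun hcon => ?_
          exact hp.2.2.1 ⟨(hab n hnk (n + 1) hn1 (Nat.ne_of_lt (Nat.lt_succ_self n))).symm,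
            hp.2.1, a 0, han, hcon⟩
      · intro _ he1
        have hno : Odd n := by
          rcases he1 with ⟨m, hm⟩; exact ⟨m - 1, by omega⟩
        have hbn : A (b n) (a 0) := (ih hnk).1 hno
        refine (hadj_aa (n + 1) (Nat.succ_pos n) hn1).resolve_left fun hcon => ?_
        exact hp.2.2.2.2.2 ⟨hab (n + 1) hn1 n hnk (Nat.ne_of_gt (Nat.lt_succ_self n)),
          hp.2.2.2.2.1, a 0, hbn, hcon⟩
  -- backward chain
  have backward : ∀ d i, i + d = k - 1 → 0 < i →
      (Odd i → A (a 0) (a i)) ∧ (Even i → A (a 0) (b i)) := by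
    intro d
    induction d with
    | zero =>
      intro i hi h0
      have hik : i < k := by omega
      have hie : i = k - 1 := by omega
      have heven : Even i := by
        subst hie; exact Nat.Odd.sub_odd hodd odd_one
      constructor
      · intro ho
        exact absurd ho (by rcases heven with ⟨m, hm⟩; rintro ⟨l, hl⟩; omega)
      · intro _
        subst hie
        exact (hadj_ab (k - 1) h0 hik).resolve_right hclose.2.2.2.2.1
    | succ d ihd =>
      intro i hi h0
      have hik : i < k := by omega
      have hi1k : i + 1 < k := by omega
      have hp := hpath i hi1k
      have ih1 := ihd (i + 1) (by omega) (Nat.succ_pos i)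
      constructor
      · intro ho
        have he1 : Even (i + 1) := by rcases ho with ⟨m, hm⟩; exact ⟨m + 1, by omega⟩
        have hb1 : A (a 0) (b (i + 1)) := ih1.2 he1
        refine (hadj_aa i h0 hik).resolve_right fun hcon => ?_
        exact hp.2.2.1 ⟨(hab i hik (i + 1) hi1k (Nat.ne_of_lt (Nat.lt_succ_self i))).symm,
          hp.2.1, a 0, hcon, hb1⟩
      · intro he
        have ho1 : Odd (i + 1) := by rcases he with ⟨m, hm⟩; exact ⟨m, by omega⟩
        have ha1 : A (a 0) (a (i + 1)) := ih1.1 ho1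
        refine (hadj_ab i h0 hik).resolve_right fun hcon => ?_
        exact hp.2.2.2.2.2 ⟨hab (i + 1) hi1k i hik (Nat.ne_of_gt (Nat.lt_succ_self i)),
          hp.2.2.2.2.1, a 0, hcon, ha1⟩
  intro i h0 hik
  constructor
  · intro ho
    exact ⟨(backward (k - 1 - i) i (by omega) h0).1 ho, (forward i hik).1 ho⟩
  · intro he
    exact ⟨(forward i hik).2 h0 he, (backward (k - 1 - i) i (by omega) h0).2 he⟩


/-- first neighborhoods in `D[K(C)]` for an odd losing cycle
`a₁b₁,…,a_kb_k` (0-indexed here: `a 0 = a₁,…, a (k-1) = a_k`). In 1-based terms,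
`N⁺(a₁) = N⁻(b₁) = {a₂,b₃,a₄,…,a_{k-1},b_k}` and
`N⁻(a₁) = N⁺(b₁) = {b₂,a₃,b₄,…,b_{k-1},a_k}`. -/
theorem odd_losing_cycle_first_neighborhoods [Fintype V]
    (A : V → V → Prop) (hA : NoDigons A)
    (hMatching : ∀ v x y : V, MissingEdge A v x → MissingEdge A v y → x = y)
    (k : ℕ) (hk : 0 < k) (hodd : Odd k) (a b : ℕ → V)
    (hmiss : ∀ i < k, MissingEdge A (a i) (b i))
    (hdist : ∀ i < k, ∀ j < k, i ≠ j → s(a i, b i) ≠ s(a j, b j))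
    (hpath : ∀ i, i + 1 < k → LosesAt A (a i) (b i) (a (i + 1)) (b (i + 1)))
    (hclose : LosesAt A (a (k - 1)) (b (k - 1)) (a 0) (b 0)) :
    NplusIn A {v | ∃ i < k, v = a i ∨ v = b i} (a 0) =
      {v | ∃ i, 0 < i ∧ i < k ∧ ((Odd i ∧ v = a i) ∨ (Even i ∧ v = b i))} ∧
    NminusIn A {v | ∃ i < k, v = a i ∨ v = b i} (b 0) =
      {v | ∃ i, 0 < i ∧ i < k ∧ ((Odd i ∧ v = a i) ∨ (Even i ∧ v = b i))} ∧
    NminusIn A {v | ∃ i < k, v = a i ∨ v = b i} (a 0) =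
      {v | ∃ i, 0 < i ∧ i < k ∧ ((Odd i ∧ v = b i) ∨ (Even i ∧ v = a i))} ∧
    NplusIn A {v | ∃ i < k, v = a i ∨ v = b i} (b 0) =
      {v | ∃ i, 0 < i ∧ i < k ∧ ((Odd i ∧ v = b i) ∨ (Even i ∧ v = a i))} := by
  have hmiss' : ∀ i < k, MissingEdge A (b i) (a i) := fun i hi => missingEdge_symm (hmiss i hi)
  have hdist' : ∀ i < k, ∀ j < k, i ≠ j → s(b i, a i) ≠ s(b j, a j) := by
    intro i hi j hj hij h
    exact hdist i hi j hj hij (Sym2.eq_swap.trans (h.trans Sym2.eq_swap))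
  have hpath' : ∀ i, i + 1 < k → LosesAt A (b i) (a i) (b (i + 1)) (a (i + 1)) := by
    intro i hi
    obtain ⟨h1, h2, h3, h4, h5, h6⟩ := hpath i hi
    exact ⟨h4, h5, h6, h1, h2, h3⟩
  have hclose' : LosesAt A (b (k - 1)) (a (k - 1)) (b 0) (a 0) := by
    obtain ⟨h1, h2, h3, h4, h5, h6⟩ := hclose
    exact ⟨h4, h5, h6, h1, h2, h3⟩
  have coreA := core_lemma A hMatching k hodd a b hmiss hdist hpath hclose
  have coreB := core_lemma A hMatching k hodd b a hmiss' hdist' hpath' hclose'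
  refine ⟨?_, ?_, ?_, ?_⟩
  · ext v
    simp only [NplusIn, Set.mem_setOf_eq]
    constructor
    · rintro ⟨⟨i, hik, hv | hv⟩, hAv⟩ <;> subst hv
      · rcases Nat.eq_zero_or_pos i with h0 | h0
        · subst h0; exact absurd ⟨hAv, hAv⟩ (hA _ _)
        · rcases Nat.even_or_odd i with he | ho
          · exact absurd ⟨hAv, ((coreA i h0 hik).2 he).1⟩ (hA _ _)
          · exact ⟨i, h0, hik, Or.inl ⟨ho, rfl⟩⟩
      · rcases Nat.eq_zero_or_pos i with h0 | h0
        · subst h0; exact absurd hAv (hmiss 0 hk).2.1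
        · rcases Nat.even_or_odd i with he | ho
          · exact ⟨i, h0, hik, Or.inr ⟨he, rfl⟩⟩
          · exact absurd ⟨hAv, ((coreA i h0 hik).1 ho).2⟩ (hA _ _)
    · rintro ⟨i, h0, hik, ⟨ho, rfl⟩ | ⟨he, rfl⟩⟩
      · exact ⟨⟨i, hik, Or.inl rfl⟩, ((coreA i h0 hik).1 ho).1⟩
      · exact ⟨⟨i, hik, Or.inr rfl⟩, ((coreA i h0 hik).2 he).2⟩
  · ext v
    simp only [NminusIn, Set.mem_setOf_eq]
    constructor
    · rintro ⟨⟨i, hik, hv | hv⟩, hAv⟩ <;> subst hv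
      · rcases Nat.eq_zero_or_pos i with h0 | h0
        · subst h0; exact absurd hAv (hmiss 0 hk).2.1
        · rcases Nat.even_or_odd i with he | ho
          · exact absurd ⟨hAv, ((coreB i h0 hik).2 he).2⟩ (hA _ _)
          · exact ⟨i, h0, hik, Or.inl ⟨ho, rfl⟩⟩
      · rcases Nat.eq_zero_or_pos i with h0 | h0
        · subst h0; exact absurd ⟨hAv, hAv⟩ (hA _ _)
        · rcases Nat.even_or_odd i with he | ho
          · exact ⟨i, h0, hik, Or.inr ⟨he, rfl⟩⟩
          · exact absurd ⟨hAv, ((coreB i h0 hik).1 ho).1⟩ (hA _ _)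
    · rintro ⟨i, h0, hik, ⟨ho, rfl⟩ | ⟨he, rfl⟩⟩
      · exact ⟨⟨i, hik, Or.inl rfl⟩, ((coreB i h0 hik).1 ho).2⟩
      · exact ⟨⟨i, hik, Or.inr rfl⟩, ((coreB i h0 hik).2 he).1⟩
  · ext v
    simp only [NminusIn, Set.mem_setOf_eq]
    constructor
    · rintro ⟨⟨i, hik, hv | hv⟩, hAv⟩ <;> subst hv
      · rcases Nat.eq_zero_or_pos i with h0 | h0
        · subst h0; exact absurd ⟨hAv, hAv⟩ (hA _ _)
        · rcases Nat.even_or_odd i with he | ho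
          · exact ⟨i, h0, hik, Or.inr ⟨he, rfl⟩⟩
          · exact absurd ⟨hAv, ((coreA i h0 hik).1 ho).1⟩ (hA _ _)
      · rcases Nat.eq_zero_or_pos i with h0 | h0
        · subst h0; exact absurd hAv (hmiss 0 hk).2.2
        · rcases Nat.even_or_odd i with he | ho
          · exact absurd ⟨hAv, ((coreA i h0 hik).2 he).2⟩ (hA _ _)
          · exact ⟨i, h0, hik, Or.inl ⟨ho, rfl⟩⟩
    · rintro ⟨i, h0, hik, ⟨ho, rfl⟩ | ⟨he, rfl⟩⟩
      · exact ⟨⟨i, hik, Or.inr rfl⟩, ((coreA i h0 hik).1 ho).2⟩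
      · exact ⟨⟨i, hik, Or.inl rfl⟩, ((coreA i h0 hik).2 he).1⟩
  · ext v
    simp only [NplusIn, Set.mem_setOf_eq]
    constructor
    · rintro ⟨⟨i, hik, hv | hv⟩, hAv⟩ <;> subst hv
      · rcases Nat.eq_zero_or_pos i with h0 | h0
        · subst h0; exact absurd hAv (hmiss 0 hk).2.2
        · rcases Nat.even_or_odd i with he | ho
          · exact ⟨i, h0, hik, Or.inr ⟨he, rfl⟩⟩
          · exact absurd ⟨hAv, ((coreB i h0 hik).1 ho).2⟩ (hA _ _)
      · rcases Nat.eq_zero_or_pos i with h0 | h0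
        · subst h0; exact absurd ⟨hAv, hAv⟩ (hA _ _)
        · rcases Nat.even_or_odd i with he | ho
          · exact absurd ⟨hAv, ((coreB i h0 hik).2 he).1⟩ (hA _ _)
          · exact ⟨i, h0, hik, Or.inl ⟨ho, rfl⟩⟩
    · rintro ⟨i, h0, hik, ⟨ho, rfl⟩ | ⟨he, rfl⟩⟩
      · exact ⟨⟨i, hik, Or.inr rfl⟩, ((coreB i h0 hik).1 ho).1⟩
      · exact ⟨⟨i, hik, Or.inl rfl⟩, ((coreB i h0 hik).2 he).2⟩
end

section
/- Let D be a digraph without digons missing a matching, and let C = a₁b₁,...,a_kb_k be a directed cycle of its dependency digraph. Then in D[K(C)], every vertex v satisfies |N^{++}(v)| = |N^+(v)| = |N^-(v)| = k−1; in particular every vertex of K(C) has the SNP in D[K(C)]. More precisely, N^{++}(a_i) = (N^-(a_i) ∪ {b_i}) \ {b_{i+1}} and N^{++}(b_i) = (N^-(b_i) ∪ {a_i}) \ {a_{i+1}} (with a_{k+1}=a₁, b_{k+1}=b₁ if k odd; a_{k+1}=b₁, b_{k+1}=a₁ if k even). -/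
variable {V : Type*}

/-- Second out-neighborhood of `x` in the subdigraph induced on `K`. -/
def NppIn (A : V → V → Prop) (K : Set V) (x : V) : Set V :=
  {u ∈ K | u ≠ x ∧ ¬ A x u ∧ ∃ w ∈ K, A x w ∧ A w u}

/-! Label `K(C)` as `c₀, …, c_{2k-1}` (indices mod `2k`) so that `c_{j+k}` is the partner of
`c_j` and the pair `c_j c_{j+k}` loses to `c_{j+k+1} c_{j+1}`; in particular `c_{j+1}` is not
reachable from `c_j` in at most two steps. All non-partners are adjacent, and there is no arc
`c_j → c_{j+d}` with `0 < d < k`: as `c_j` has no 2-path to `c_{j+1}`, such an arc forces the arc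
`c_{j+1} → c_{j+d}`, and descending in `d` ends at a forbidden arc `c_{j'} → c_{j'+1}`. Hence
`c_i → c_j` exactly when `j - i ≡ k+1, …, 2k-1 (mod 2k)`, so `N⁺(c_j)`, `N⁻(c_j)` and `N⁺⁺(c_j)`
are the vertices at offsets `(k, 2k)`, `(0, k)` and `[2, k]` from `c_j`. -/

structure LosingCycleLabelling (A : V → V → Prop) (k : ℕ) (c : ℕ → V) : Prop where
  pos : 0 < k
  periodic : Function.Periodic c (2 * k)
  add_ne : ∀ j d, 0 < d → d < 2 * k → c (j + d) ≠ c j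
  irrefl : ∀ j, ¬ A (c j) (c j)
  not_adj_add_self : ∀ j, ¬ A (c j) (c (j + k))
  adj : ∀ i j, c j ≠ c i → c j ≠ c (i + k) → A (c i) (c j) ∨ A (c j) (c i)
  not_adj_succ : ∀ j, ¬ A (c j) (c (j + 1))
  succ_notMem_Npp : ∀ j, c (j + 1) ∉ Npp A (c j)

namespace LosingCycleLabelling

variable {A : V → V → Prop} {k : ℕ} {c : ℕ → V}

theorem add_inj (H : LosingCycleLabelling A k c) {j d e : ℕ} (hd : d < 2 * k) (he : e < 2 * k)
    (h : c (j + d) = c (j + e)) : d = e := by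
  by_contra hne
  rcases Nat.lt_or_gt_of_ne hne with hlt | hlt
  · refine H.add_ne (j + d) (e - d) (by omega) (by omega) ?_
    rw [show j + d + (e - d) = j + e by omega, h]
  · refine H.add_ne (j + e) (d - e) (by omega) (by omega) ?_
    rw [show j + e + (d - e) = j + d by omega, h]

theorem exists_add_eq (H : LosingCycleLabelling A k c) (j m : ℕ) :
    ∃ d < 2 * k, c (j + d) = c m := by
  have hk := H.pos
  refine ⟨(m + (2 * k - 1) * j) % (2 * k), Nat.mod_lt _ (by omega), ?_⟩
  have h : j + (m + (2 * k - 1) * j) = m + j * (2 * k) := by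
    obtain ⟨n, hn⟩ := Nat.exists_eq_add_of_lt (show 0 < 2 * k by omega)
    rw [hn, Nat.add_sub_cancel]
    ring
  rw [(H.periodic.const_add j).map_mod_nat, h]
  exact H.periodic.nat_mul j m

theorem not_adj_add_of_lt (H : LosingCycleLabelling A k c) {d : ℕ} (hd : 0 < d) (hdk : d < k)
    (j : ℕ) : ¬ A (c j) (c (j + d)) := by
  induction d, hd using Nat.le_induction generalizing j with
  | base => exact H.not_adj_succ j
  | succ d hd ih =>
    intro hj
    have hne : c (j + 1 + d) ≠ c (j + 1) := H.add_ne _ d hd (by omega)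
    have hne' : c (j + 1 + d) ≠ c (j + 1 + k) := fun h => by
      have := H.add_inj (by omega) (by omega) h; omega
    rcases H.adj (j + 1) (j + 1 + d) hne hne' with h | h
    · exact ih (by omega) (j + 1) h
    · refine H.succ_notMem_Npp j ⟨H.add_ne j 1 one_pos (by omega), H.not_adj_succ j, _, hj, ?_⟩
      rwa [show j + (d + 1) = j + 1 + d by ring]

theorem adj_add_iff (H : LosingCycleLabelling A k c) {d : ℕ} (hd : d < 2 * k) (j : ℕ) :
    A (c j) (c (j + d)) ↔ k < d := by
  refine ⟨fun h => ?_, fun hkd => ?_⟩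
  · by_contra hdk
    rcases Nat.eq_zero_or_pos d with rfl | hd0
    · exact H.irrefl j h
    rcases (Nat.le_of_not_lt hdk).lt_or_eq with hlt | rfl
    · exact H.not_adj_add_of_lt hd0 hlt j h
    · exact H.not_adj_add_self j h
  · have hne : c (j + d) ≠ c j := H.add_ne j d (by omega) hd
    have hne' : c (j + d) ≠ c (j + k) := fun h => by
      have := H.add_inj hd (by omega) h; omega
    refine (H.adj j (j + d) hne hne').resolve_right fun h => ?_
    refine H.not_adj_add_of_lt (d := 2 * k - d) (by omega) (by omega) (j + d) ?_
    rwa [show j + d + (2 * k - d) = j + 2 * k by omega, H.periodic]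

theorem adj_add_add_iff (H : LosingCycleLabelling A k c) {d e : ℕ} (hd : d < 2 * k)
    (he : e < 2 * k) (j : ℕ) :
    A (c (j + e)) (c (j + d)) ↔ e + k < d ∨ d < e ∧ e < d + k := by
  rcases le_or_gt e d with hed | hde
  · rw [show j + d = j + e + (d - e) by omega, H.adj_add_iff (by omega)]
    omega
  · rw [← H.periodic (j + d), show j + d + 2 * k = j + e + (d + 2 * k - e) by omega,
      H.adj_add_iff (by omega)]
    omega

theorem injOn_add (H : LosingCycleLabelling A k c) (j : ℕ) :
    Set.InjOn (fun d => c (j + d)) (Set.Iio (2 * k)) :=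
  fun _ hd _ he h => H.add_inj hd he h

theorem eq_image_add (H : LosingCycleLabelling A k c) (j : ℕ) {S : Set V} {s : Set ℕ}
    (hS : S ⊆ Set.range c) (hs : s ⊆ Set.Iio (2 * k))
    (h : ∀ d < 2 * k, c (j + d) ∈ S ↔ d ∈ s) :
    S = (fun d => c (j + d)) '' s := by
  ext u
  constructor
  · intro hu
    obtain ⟨m, rfl⟩ := hS hu
    obtain ⟨d, hd, hdm⟩ := H.exists_add_eq j m
    exact ⟨d, (h d hd).1 (hdm ▸ hu), hdm⟩
  · rintro ⟨d, hd, rfl⟩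
    exact (h d (hs hd)).2 hd

theorem add_mem_NppIn_iff (H : LosingCycleLabelling A k c) {d : ℕ} (hd : d < 2 * k) (j : ℕ) :
    c (j + d) ∈ NppIn A (Set.range c) (c j) ↔ 2 ≤ d ∧ d ≤ k := by
  constructor
  · rintro ⟨-, hne, hna, w, ⟨m, rfl⟩, h1, h2⟩
    obtain ⟨e, he, hem⟩ := H.exists_add_eq j m
    rw [← hem] at h1 h2
    have hke := (H.adj_add_iff he j).1 h1
    have hed := (H.adj_add_add_iff hd he j).1 h2
    have hd0 : d ≠ 0 := by rintro rfl; exact hne rfl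
    have hdk : ¬ k < d := fun h => hna ((H.adj_add_iff hd j).2 h)
    omega
  · rintro ⟨hd2, hdk⟩
    refine ⟨Set.mem_range_self _, H.add_ne j d (by omega) hd,
      fun h => absurd ((H.adj_add_iff hd j).1 h) (by omega),
      c (j + (k + 1)), Set.mem_range_self _, (H.adj_add_iff (by omega) j).2 (by omega),
      (H.adj_add_add_iff hd (by omega) j).2 (by omega)⟩

theorem NplusIn_eq_image (H : LosingCycleLabelling A k c) (j : ℕ) :
    NplusIn A (Set.range c) (c j) = (fun d => c (j + d)) '' Set.Ioo k (2 * k) :=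
  H.eq_image_add j (fun _ hu => hu.1) (fun _ hd => hd.2) fun d hd => by
    simp [NplusIn, H.adj_add_iff hd j, hd]

theorem NminusIn_eq_image (H : LosingCycleLabelling A k c) (j : ℕ) :
    NminusIn A (Set.range c) (c j) = (fun d => c (j + d)) '' Set.Ioo 0 k :=
  H.eq_image_add j (fun _ hu => hu.1) (fun _ hd => by simp at hd ⊢; omega) fun d hd => by
    simpa [NminusIn] using H.adj_add_add_iff (d := 0) (by omega) hd j

theorem NppIn_eq_image (H : LosingCycleLabelling A k c) (j : ℕ) :
    NppIn A (Set.range c) (c j) = (fun d => c (j + d)) '' Set.Icc 2 k :=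
  H.eq_image_add j (fun _ hu => hu.1) (fun _ hd => by simp at hd ⊢; have := H.pos; omega)
    fun d hd => by simpa using H.add_mem_NppIn_iff hd j

theorem NppIn_eq (H : LosingCycleLabelling A k c) (j : ℕ) :
    NppIn A (Set.range c) (c j) =
      (NminusIn A (Set.range c) (c j) ∪ {c (j + k)}) \ {c (j + 1)} := by
  have hk := H.pos
  have hsub : Set.Ioo 0 k ∪ {k} ⊆ Set.Iio (2 * k) := by
    intro d hd; simp at hd ⊢; omega
  have hsingleton (d : ℕ) : ({c (j + d)} : Set V) = (fun d => c (j + d)) '' {d} :=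
    (Set.image_singleton (f := fun d => c (j + d))).symm
  rw [H.NppIn_eq_image, H.NminusIn_eq_image, hsingleton, hsingleton, ← Set.image_union,
    ← ((H.injOn_add j).mono hsub).image_sdiff_subset (by simp; omega)]
  congr 1
  ext d
  simp
  omega

theorem ncard_NplusIn (H : LosingCycleLabelling A k c) (j : ℕ) :
    (NplusIn A (Set.range c) (c j)).ncard = k - 1 := by
  rw [H.NplusIn_eq_image, ((H.injOn_add j).mono fun _ hd => hd.2).ncard_image,
    Set.ncard_Ioo_nat]
  omega

theorem ncard_NminusIn (H : LosingCycleLabelling A k c) (j : ℕ) :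
    (NminusIn A (Set.range c) (c j)).ncard = k - 1 := by
  rw [H.NminusIn_eq_image,
    ((H.injOn_add j).mono fun _ hd => by simp at hd ⊢; omega).ncard_image, Set.ncard_Ioo_nat]
  omega

theorem ncard_NppIn (H : LosingCycleLabelling A k c) (j : ℕ) :
    (NppIn A (Set.range c) (c j)).ncard = k - 1 := by
  rw [H.NppIn_eq_image,
    ((H.injOn_add j).mono fun _ hd => by simp at hd ⊢; have := H.pos; omega).ncard_image,
    Set.ncard_Icc_nat]
  omega

end LosingCycleLabelling

theorem MissingEdge.symm {A : V → V → Prop} {u v : V} (h : MissingEdge A u v) :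
    MissingEdge A v u :=
  ⟨h.1.symm, h.2.2, h.2.1⟩

theorem Nat.eq_of_add_mod_eq_mod {j d k : ℕ} (h : (j + d) % k = j % k) (hd0 : 0 < d)
    (hd : d < 2 * k) : d = k := by
  obtain ⟨m, rfl⟩ : k ∣ d := by
    simpa using (Nat.modEq_iff_dvd' (Nat.le_add_right j d)).1 h.symm
  rcases m with _ | _ | m
  · simp at hd0
  · simp
  · nlinarith

def cycleNext (a b : ℕ → V) (k i : ℕ) : V :=
  if i + 1 < k then a (i + 1) else if Odd k then a 0 else b 0

/-- With this choice `c (j + k)` is the partner of `c j`, and `c (j + 1)` is the endpoint of the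
next missing edge that `c j` cannot reach. -/
def cycleLabel (a b : ℕ → V) (k j : ℕ) : V :=
  if Even (j / k + j % k) then a (j % k) else b (j % k)

section cycleLabel

variable {A : V → V → Prop} {a b : ℕ → V} {k i : ℕ}

theorem cycleLabel_mul_add (hi : i < k) (q : ℕ) :
    cycleLabel a b k (q * k + i) = if Even (q + i) then a i else b i := by
  have hdiv : (q * k + i) / k = q := by
    rw [add_comm, Nat.add_mul_div_right _ _ (by omega), Nat.div_eq_of_lt hi, zero_add]
  have hmod : (q * k + i) % k = i := by
    rw [add_comm, Nat.add_mul_mod_self_right, Nat.mod_eq_of_lt hi]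
  rw [cycleLabel, hdiv, hmod]

theorem cycleLabel_mul_add_succ (hi : i < k) (q : ℕ) :
    cycleLabel a b k (q * k + i + 1) =
      if Even (q + i) then cycleNext b a k i else cycleNext a b k i := by
  by_cases hik : i + 1 < k
  · rw [add_assoc, cycleLabel_mul_add hik, cycleNext, cycleNext, if_pos hik, if_pos hik,
      ← add_assoc]
    by_cases h : Even (q + i) <;> simp [h, Nat.even_add_one]
  · obtain rfl : k = i + 1 := by omega
    rw [show q * (i + 1) + i + 1 = (q + 1) * (i + 1) + 0 by ring, cycleLabel_mul_add (by omega),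
      cycleNext, cycleNext, if_neg hik, if_neg hik]
    simp only [add_zero, Nat.even_add_one, Nat.even_add, ← Nat.not_even_iff_odd]
    by_cases hq : Even q <;> by_cases hi : Even i <;> simp [hq, hi]

theorem cycleLabel_of_even (hi : i < k) {q : ℕ} (h : Even (q + i)) :
    cycleLabel a b k (q * k + i) = a i ∧ cycleLabel a b k (q * k + i + k) = b i ∧
      cycleLabel a b k (q * k + i + 1) = cycleNext b a k i := by
  have h' : ¬ Even (q + 1 + i) := by rw [add_right_comm, Nat.even_add_one]; exact not_not.2 h
  rw [show q * k + i + k = (q + 1) * k + i by ring, cycleLabel_mul_add hi, cycleLabel_mul_add hi,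
    cycleLabel_mul_add_succ hi, if_pos h, if_neg h', if_pos h]
  exact ⟨rfl, rfl, rfl⟩

theorem cycleLabel_of_not_even (hi : i < k) {q : ℕ} (h : ¬ Even (q + i)) :
    cycleLabel a b k (q * k + i) = b i ∧ cycleLabel a b k (q * k + i + k) = a i ∧
      cycleLabel a b k (q * k + i + 1) = cycleNext a b k i := by
  have h' : Even (q + 1 + i) := by rw [add_right_comm, Nat.even_add_one]; exact h
  rw [show q * k + i + k = (q + 1) * k + i by ring, cycleLabel_mul_add hi, cycleLabel_mul_add hi,
    cycleLabel_mul_add_succ hi, if_neg h, if_pos h', if_neg h]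
  exact ⟨rfl, rfl, rfl⟩

theorem cycleLabel_cases (hk : 0 < k) (j : ℕ) :
    (cycleLabel a b k j = a (j % k) ∧ cycleLabel a b k (j + k) = b (j % k) ∧
        cycleLabel a b k (j + 1) = cycleNext b a k (j % k)) ∨
      (cycleLabel a b k j = b (j % k) ∧ cycleLabel a b k (j + k) = a (j % k) ∧
        cycleLabel a b k (j + 1) = cycleNext a b k (j % k)) := by
  by_cases h : Even (j / k + j % k)
  · have := cycleLabel_of_even (a := a) (b := b) (Nat.mod_lt j hk) h
    rw [Nat.div_add_mod'] at this
    exact Or.inl this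
  · have := cycleLabel_of_not_even (a := a) (b := b) (Nat.mod_lt j hk) h
    rw [Nat.div_add_mod'] at this
    exact Or.inr this

theorem cycleLabel_periodic (hk : 0 < k) : Function.Periodic (cycleLabel a b k) (2 * k) := by
  intro j
  rw [← Nat.div_add_mod' j k, show j / k * k + j % k + 2 * k = (j / k + 2) * k + j % k by ring,
    cycleLabel_mul_add (Nat.mod_lt j hk), cycleLabel_mul_add (Nat.mod_lt j hk),
    add_right_comm]
  simp [Nat.even_add]

theorem range_cycleLabel (hk : 0 < k) :
    Set.range (cycleLabel a b k) = {v | ∃ i < k, v = a i ∨ v = b i} := by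
  ext v
  constructor
  · rintro ⟨j, rfl⟩
    rcases cycleLabel_cases (a := a) (b := b) hk j with ⟨h, -⟩ | ⟨h, -⟩
    · exact ⟨j % k, Nat.mod_lt j hk, Or.inl h⟩
    · exact ⟨j % k, Nat.mod_lt j hk, Or.inr h⟩
  · rintro ⟨i, hi, rfl | rfl⟩
    · exact ⟨i * k + i, (cycleLabel_of_even hi ⟨i, rfl⟩).1⟩
    · exact ⟨(i + 1) * k + i, (cycleLabel_of_not_even hi (by simp [add_right_comm])).1⟩

theorem losesAt_cycleNext
    (hpath : ∀ i, i + 1 < k → LosesAt A (a i) (b i) (a (i + 1)) (b (i + 1)))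
    (hcloseOdd : Odd k → LosesAt A (a (k - 1)) (b (k - 1)) (a 0) (b 0))
    (hcloseEven : Even k → LosesAt A (a (k - 1)) (b (k - 1)) (b 0) (a 0)) (hi : i < k) :
    LosesAt A (a i) (b i) (cycleNext a b k i) (cycleNext b a k i) := by
  unfold cycleNext
  by_cases hik : i + 1 < k
  · simpa only [if_pos hik] using hpath i hik
  · obtain rfl : i = k - 1 := by omega
    rcases Nat.even_or_odd k with hk | hk
    · simpa only [if_neg hik, if_neg (Nat.not_odd_iff_even.2 hk)] using hcloseEven hk
    · simpa only [if_neg hik, if_pos hk] using hcloseOdd hk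

theorem cycleLabel_sym2 (hk : 0 < k) (j : ℕ) :
    s(cycleLabel a b k j, cycleLabel a b k (j + k)) = s(a (j % k), b (j % k)) := by
  rcases cycleLabel_cases (a := a) (b := b) hk j with ⟨h1, h2, -⟩ | ⟨h1, h2, -⟩
  · rw [h1, h2]
  · rw [h1, h2, Sym2.eq_swap]

theorem missingEdge_cycleLabel (hk : 0 < k) (hmiss : ∀ i < k, MissingEdge A (a i) (b i))
    (j : ℕ) : MissingEdge A (cycleLabel a b k j) (cycleLabel a b k (j + k)) := by
  rcases cycleLabel_cases (a := a) (b := b) hk j with ⟨h1, h2, -⟩ | ⟨h1, h2, -⟩ <;> rw [h1, h2]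
  · exact hmiss _ (Nat.mod_lt j hk)
  · exact (hmiss _ (Nat.mod_lt j hk)).symm

theorem cycleLabel_add_ne (hk : 0 < k)
    (hMatching : ∀ v x y : V, MissingEdge A v x → MissingEdge A v y → x = y)
    (hmiss : ∀ i < k, MissingEdge A (a i) (b i))
    (hdist : ∀ i < k, ∀ j < k, i ≠ j → s(a i, b i) ≠ s(a j, b j))
    {j d : ℕ} (hd0 : 0 < d) (hd : d < 2 * k) : cycleLabel a b k (j + d) ≠ cycleLabel a b k j := by
  intro h
  have hpartner : cycleLabel a b k (j + d + k) = cycleLabel a b k (j + k) :=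
    hMatching _ _ _ (h ▸ missingEdge_cycleLabel hk hmiss (j + d))
      (missingEdge_cycleLabel hk hmiss j)
  have hmod : (j + d) % k = j % k := by
    by_contra hne
    refine hdist _ (Nat.mod_lt _ hk) _ (Nat.mod_lt _ hk) hne ?_
    rw [← cycleLabel_sym2 hk, ← cycleLabel_sym2 hk, h, hpartner]
  obtain rfl := Nat.eq_of_add_mod_eq_mod hmod hd0 hd
  exact (missingEdge_cycleLabel hk hmiss j).1 h.symm

theorem cycleLabel_adj (hk : 0 < k)
    (hMatching : ∀ v x y : V, MissingEdge A v x → MissingEdge A v y → x = y)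
    (hmiss : ∀ i < k, MissingEdge A (a i) (b i)) {j : ℕ}
    (hne : cycleLabel a b k j ≠ cycleLabel a b k i)
    (hne' : cycleLabel a b k j ≠ cycleLabel a b k (i + k)) :
    A (cycleLabel a b k i) (cycleLabel a b k j) ∨ A (cycleLabel a b k j) (cycleLabel a b k i) := by
  by_contra h
  exact hne' (hMatching _ _ _ ⟨hne.symm, not_or.1 h⟩ (missingEdge_cycleLabel hk hmiss i))

theorem cycleLabel_succ (hk : 0 < k)
    (hloses : ∀ i < k, LosesAt A (a i) (b i) (cycleNext a b k i) (cycleNext b a k i)) (j : ℕ) :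
    ¬ A (cycleLabel a b k j) (cycleLabel a b k (j + 1)) ∧
      cycleLabel a b k (j + 1) ∉ Npp A (cycleLabel a b k j) := by
  obtain ⟨-, h1, h2, -, h4, h5⟩ := hloses _ (Nat.mod_lt j hk)
  rcases cycleLabel_cases (a := a) (b := b) hk j with ⟨e1, -, e2⟩ | ⟨e1, -, e2⟩ <;> rw [e1, e2]
  exacts [⟨h1, h2⟩, ⟨h4, h5⟩]

theorem losingCycleLabelling_cycleLabel (hA : NoDigons A)
    (hMatching : ∀ v x y : V, MissingEdge A v x → MissingEdge A v y → x = y)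
    (hk : 0 < k) (hmiss : ∀ i < k, MissingEdge A (a i) (b i))
    (hdist : ∀ i < k, ∀ j < k, i ≠ j → s(a i, b i) ≠ s(a j, b j))
    (hloses : ∀ i < k, LosesAt A (a i) (b i) (cycleNext a b k i) (cycleNext b a k i)) :
    LosingCycleLabelling A k (cycleLabel a b k) where
  pos := hk
  periodic := cycleLabel_periodic hk
  add_ne _ _ hd0 hd := cycleLabel_add_ne hk hMatching hmiss hdist hd0 hd
  irrefl _ h := hA _ _ ⟨h, h⟩
  not_adj_add_self j := (missingEdge_cycleLabel hk hmiss j).2.1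
  adj _ _ := cycleLabel_adj hk hMatching hmiss
  not_adj_succ j := (cycleLabel_succ hk hloses j).1
  succ_notMem_Npp j := (cycleLabel_succ hk hloses j).2

end cycleLabel

theorem losing_cycle_second_neighborhoods_general
    (A : V → V → Prop) (hA : NoDigons A)
    (hMatching : ∀ v x y : V, MissingEdge A v x → MissingEdge A v y → x = y)
    (k : ℕ) (hk : 0 < k) (a b : ℕ → V)
    (hmiss : ∀ i < k, MissingEdge A (a i) (b i))
    (hdist : ∀ i < k, ∀ j < k, i ≠ j → s(a i, b i) ≠ s(a j, b j))
    (hpath : ∀ i, i + 1 < k → LosesAt A (a i) (b i) (a (i + 1)) (b (i + 1)))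
    (hcloseOdd : Odd k → LosesAt A (a (k - 1)) (b (k - 1)) (a 0) (b 0))
    (hcloseEven : Even k → LosesAt A (a (k - 1)) (b (k - 1)) (b 0) (a 0))
    (K : Set V) (hK : K = {v | ∃ i < k, v = a i ∨ v = b i}) :
    (∀ i < k,
      NppIn A K (a i) =
        (NminusIn A K (a i) ∪ {b i}) \
          {if i + 1 < k then b (i + 1) else if Odd k then b 0 else a 0} ∧
      NppIn A K (b i) =
        (NminusIn A K (b i) ∪ {a i}) \
          {if i + 1 < k then a (i + 1) else if Odd k then a 0 else b 0}) ∧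
    (∀ v ∈ K, (NppIn A K v).ncard = k - 1 ∧ (NplusIn A K v).ncard = k - 1 ∧
      (NminusIn A K v).ncard = k - 1 ∧ (NplusIn A K v).ncard ≤ (NppIn A K v).ncard) := by
  have H := losingCycleLabelling_cycleLabel hA hMatching hk hmiss hdist
    fun i hi => losesAt_cycleNext hpath hcloseOdd hcloseEven hi
  rw [← range_cycleLabel hk] at hK
  subst hK
  refine ⟨fun i hi => ⟨?_, ?_⟩, ?_⟩
  · obtain ⟨ha, hb, hnext⟩ := cycleLabel_of_even (a := a) (b := b) hi (q := i) ⟨i, rfl⟩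
    simpa only [ha, hb, hnext, cycleNext] using H.NppIn_eq (i * k + i)
  · obtain ⟨hb, ha, hnext⟩ := cycleLabel_of_not_even (a := a) (b := b) hi (q := i + 1)
      (by simp [add_right_comm])
    simpa only [ha, hb, hnext, cycleNext] using H.NppIn_eq ((i + 1) * k + i)
  · rintro v ⟨j, rfl⟩
    rw [H.ncard_NppIn, H.ncard_NplusIn, H.ncard_NminusIn]
    exact ⟨rfl, rfl, rfl, le_rfl⟩

/-- in `D[K(C)]` for a losing cycle `a₁b₁,…,a_kb_k` (0-indexed:
`a 0 = a₁,…,a (k-1) = a_k`), every vertex `v` has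
`|N⁺⁺(v)| = |N⁺(v)| = |N⁻(v)| = k-1` (so it has the SNP in `D[K(C)]`), and
`N⁺⁺(a_i) = (N⁻(a_i) ∪ {b_i}) \ {b_{i+1}}`,
`N⁺⁺(b_i) = (N⁻(b_i) ∪ {a_i}) \ {a_{i+1}}`, where `a_{k+1} = a₁, b_{k+1} = b₁`
if `k` is odd and `a_{k+1} = b₁, b_{k+1} = a₁` if `k` is even. -/
theorem losing_cycle_second_neighborhoods [Fintype V]
    (A : V → V → Prop) (hA : NoDigons A)
    (hMatching : ∀ v x y : V, MissingEdge A v x → MissingEdge A v y → x = y)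
    (k : ℕ) (hk : 0 < k) (a b : ℕ → V)
    (hmiss : ∀ i < k, MissingEdge A (a i) (b i))
    (hdist : ∀ i < k, ∀ j < k, i ≠ j → s(a i, b i) ≠ s(a j, b j))
    (hpath : ∀ i, i + 1 < k → LosesAt A (a i) (b i) (a (i + 1)) (b (i + 1)))
    (hcloseOdd : Odd k → LosesAt A (a (k - 1)) (b (k - 1)) (a 0) (b 0))
    (hcloseEven : Even k → LosesAt A (a (k - 1)) (b (k - 1)) (b 0) (a 0))
    (K : Set V) (hK : K = {v | ∃ i < k, v = a i ∨ v = b i}) :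
    (∀ i < k,
      NppIn A K (a i) =
        (NminusIn A K (a i) ∪ {b i}) \
          {if i + 1 < k then b (i + 1) else if Odd k then b 0 else a 0} ∧
      NppIn A K (b i) =
        (NminusIn A K (b i) ∪ {a i}) \
          {if i + 1 < k then a (i + 1) else if Odd k then a 0 else b 0}) ∧
    (∀ v ∈ K, (NppIn A K v).ncard = k - 1 ∧ (NplusIn A K v).ncard = k - 1 ∧
      (NminusIn A K v).ncard = k - 1 ∧ (NplusIn A K v).ncard ≤ (NppIn A K v).ncard) :=
  losing_cycle_second_neighborhoods_general A hA hMatching k hk a b hmiss hdist hpath hcloseOdd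
    hcloseEven K hK
end

section
/- Let D be a digraph without digons missing a matching (every vertex has degree at least |V(D)|−2). Then D has a vertex with the second neighborhood property. -/
variable {V : Type*}

open scoped Classical

open Finset in
/-- The score of a position map: the number of forward arcs. -/
private noncomputable def scQ [Fintype V] (A : V → V → Prop) (p : V → ℚ) : ℕ :=
  (univ.filter fun z : V × V => A z.1 z.2 ∧ p z.1 < p z.2).card

open Finset in
/-- Secondary objective: number of missing pairs whose earlier endpoint is an
out-neighbor of the top vertex. -/
private noncomputable def muQ [Fintype V] (A : V → V → Prop) (p : V → ℚ) : ℕ :=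
  (univ.filter fun z : V × V =>
    MissingEdge A z.1 z.2 ∧ p z.1 < p z.2 ∧ ∃ m, (∀ y, p y ≤ p m) ∧ A m z.1).card

open Finset in
private lemma card_swap_aux {α : Type*} [DecidableEq α] (P Q : Finset α) :
    Q.card + (P \ Q).card = P.card + (Q \ P).card := by
  have h1 : (P \ Q).card + Q.card = (P ∪ Q).card := Finset.card_sdiff_add_card P Q
  have h2 : (Q \ P).card + P.card = (Q ∪ P).card := Finset.card_sdiff_add_card Q P
  rw [Finset.union_comm] at h2
  omega

private lemma rat_sep (L H : Finset ℚ) (hH : H.Nonempty)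
    (hLH : ∀ l ∈ L, ∀ h ∈ H, l < h) :
    ∃ t : ℚ, (∀ l ∈ L, l < t) ∧ ∀ h ∈ H, t < h := by
  rcases L.eq_empty_or_nonempty with hL | hL
  · refine ⟨H.min' hH - 1, ?_, ?_⟩
    · simp [hL]
    · intro h hh
      have := H.min'_le h hh
      linarith
  · refine ⟨(L.max' hL + H.min' hH) / 2, ?_, ?_⟩
    · intro l hl
      have h1 : l ≤ L.max' hL := L.le_max' l hl
      have h2 : L.max' hL < H.min' hH := hLH _ (L.max'_mem hL) _ (H.min'_mem hH)
      linarith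
    · intro h hh
      have h1 : H.min' hH ≤ h := H.min'_le h hh
      have h2 : L.max' hL < H.min' hH := hLH _ (L.max'_mem hL) _ (H.min'_mem hH)
      linarith

open Finset in
private lemma score_update [Fintype V] (A : V → V → Prop) (p : V → ℚ)
    (hp : Function.Injective p) (x : V) (t : ℚ) (ht : ∀ u, p u ≠ t) (htx : t < p x) :
    scQ A (Function.update p x t) +
      (univ.filter fun u : V => A u x ∧ t < p u ∧ p u < p x).card
    = scQ A p + (univ.filter fun u : V => A x u ∧ t < p u ∧ p u < p x).card := by
  classical
  set q := Function.update p x t with hqdef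
  have hqx : q x = t := Function.update_self x t p
  have hqu : ∀ u, u ≠ x → q u = p u := fun u hu => Function.update_of_ne hu t p
  set P : Finset (V × V) := univ.filter fun z : V × V => A z.1 z.2 ∧ p z.1 < p z.2 with hP
  set Q : Finset (V × V) := univ.filter fun z : V × V => A z.1 z.2 ∧ q z.1 < q z.2 with hQ
  have hPQ : P \ Q = (univ.filter fun u : V => A u x ∧ t < p u ∧ p u < p x).image
      (fun u => (u, x)) := by
    ext z
    obtain ⟨a, b⟩ := z
    simp only [hP, hQ, mem_sdiff, mem_filter, mem_univ, true_and, mem_image, Prod.mk.injEq]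
    constructor
    · rintro ⟨⟨hab, hpab⟩, hnq⟩
      by_cases hax : a = x
      · subst hax
        by_cases hbx : b = a
        · exact absurd (hbx ▸ hpab) (lt_irrefl _)
        · exfalso
          exact hnq ⟨hab, by rw [hqx, hqu b hbx]; linarith⟩
      · by_cases hbx : b = x
        · subst hbx
          refine ⟨a, ⟨hab, ?_, hpab⟩, rfl, rfl⟩
          rcases lt_trichotomy t (p a) with h | h | h
          · exact h
          · exact absurd h.symm (ht a)
          · exact absurd ⟨hab, by rw [hqu a hax, hqx]; linarith⟩ hnq
        · exact absurd ⟨hab, by rw [hqu a hax, hqu b hbx]; exact hpab⟩ hnq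
    · rintro ⟨u, ⟨hu1, hu2, hu3⟩, rfl, rfl⟩
      have hux : u ≠ x := fun h => absurd (h ▸ hu3) (lt_irrefl _)
      refine ⟨⟨hu1, hu3⟩, ?_⟩
      rintro ⟨-, hlt⟩
      rw [hqu u hux, hqx] at hlt
      linarith
  have hQP : Q \ P = (univ.filter fun u : V => A x u ∧ t < p u ∧ p u < p x).image
      (fun u => (x, u)) := by
    ext z
    obtain ⟨a, b⟩ := z
    simp only [hP, hQ, mem_sdiff, mem_filter, mem_univ, true_and, mem_image, Prod.mk.injEq]
    constructor
    · rintro ⟨⟨hab, hqab⟩, hnp⟩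
      by_cases hax : a = x
      · subst hax
        by_cases hbx : b = a
        · exact absurd (hbx ▸ hqab) (lt_irrefl _)
        · rw [hqx, hqu b hbx] at hqab
          refine ⟨b, ⟨hab, hqab, ?_⟩, rfl, rfl⟩
          rcases lt_trichotomy (p b) (p a) with h | h | h
          · exact h
          · exact absurd (hp h) hbx
          · exact absurd ⟨hab, h⟩ hnp
      · by_cases hbx : b = x
        · subst hbx
          rw [hqu a hax, hqx] at hqab
          exfalso
          exact hnp ⟨hab, by linarith⟩
        · rw [hqu a hax, hqu b hbx] at hqab
          exact absurd ⟨hab, hqab⟩ hnp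
    · rintro ⟨u, ⟨hu1, hu2, hu3⟩, rfl, rfl⟩
      have hux : u ≠ x := fun h => absurd (h ▸ hu3) (lt_irrefl _)
      refine ⟨⟨hu1, by rw [hqx, hqu u hux]; exact hu2⟩, ?_⟩
      rintro ⟨-, hlt⟩
      linarith
  have hswap := card_swap_aux P Q
  rw [hPQ, hQP] at hswap
  rw [Finset.card_image_of_injective _ (fun a b h => (Prod.mk.injEq _ _ _ _).mp h |>.1),
    Finset.card_image_of_injective _ (fun a b h => (Prod.mk.injEq _ _ _ _).mp h |>.2)]
    at hswap
  have e1 : scQ A q = Q.card := by simp [scQ, hQ]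
  have e2 : scQ A p = P.card := by simp [scQ, hP]
  rw [e1, e2]
  omega

open Finset in
private lemma mu_update [Fintype V] (A : V → V → Prop)
    (hMatching : ∀ v x y : V, MissingEdge A v x → MissingEdge A v y → x = y)
    (p : V → ℚ) (hp : Function.Injective p) (f : V) (hf : ∀ y, p y ≤ p f)
    (x : V) (hxf : x ≠ f) (w : V) (hMxw : MissingEdge A x w) (t : ℚ)
    (htw : t < p w) (hwx : p w < p x) (hAfw : A f w) (hnAfx : ¬ A f x)
    (ht : ∀ u, p u ≠ t) :
    muQ A (Function.update p x t) + 1 = muQ A p := by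
  classical
  set q := Function.update p x t with hqdef
  have hqx : q x = t := Function.update_self x t p
  have hqu : ∀ u, u ≠ x → q u = p u := fun u hu => Function.update_of_ne hu t p
  have hqinj : Function.Injective q := by
    intro a b hab
    by_cases ha : a = x <;> by_cases hb : b = x
    · rw [ha, hb]
    · rw [ha] at hab ⊢; rw [hqx, hqu b hb] at hab; exact absurd hab.symm (ht b)
    · rw [hb] at hab ⊢; rw [hqx, hqu a ha] at hab; exact absurd hab (ht a)
    · rw [hqu a ha, hqu b hb] at hab; exact hp hab
  have hqf : ∀ y, q y ≤ q f := by
    intro y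
    have hfx : f ≠ x := Ne.symm hxf
    rw [hqu f hfx]
    by_cases hy : y = x
    · rw [hy, hqx]; exact le_of_lt (lt_of_lt_of_le htw (hf w))
    · rw [hqu y hy]; exact hf y
  have hmp : ∀ a, (∃ m, (∀ y, p y ≤ p m) ∧ A m a) ↔ A f a := by
    intro a
    constructor
    · rintro ⟨m, hm, hma⟩
      have : m = f := hp (le_antisymm (hf m) (hm f))
      exact this ▸ hma
    · intro h; exact ⟨f, hf, h⟩
  have hmq : ∀ a, (∃ m, (∀ y, q y ≤ q m) ∧ A m a) ↔ A f a := by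
    intro a
    constructor
    · rintro ⟨m, hm, hma⟩
      have : m = f := hqinj (le_antisymm (hqf m) (hm f))
      exact this ▸ hma
    · intro h; exact ⟨f, hqf, h⟩
  set P : Finset (V × V) := univ.filter fun z : V × V =>
    MissingEdge A z.1 z.2 ∧ p z.1 < p z.2 ∧ ∃ m, (∀ y, p y ≤ p m) ∧ A m z.1 with hP
  set Q : Finset (V × V) := univ.filter fun z : V × V =>
    MissingEdge A z.1 z.2 ∧ q z.1 < q z.2 ∧ ∃ m, (∀ y, q y ≤ q m) ∧ A m z.1 with hQ
  have hMwx : MissingEdge A w x := ⟨Ne.symm hMxw.1, hMxw.2.2, hMxw.2.1⟩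
  have hPQ : P \ Q = {(w, x)} := by
    ext z
    obtain ⟨a, b⟩ := z
    simp only [hP, hQ, mem_sdiff, mem_filter, mem_univ, true_and, mem_singleton,
      Prod.mk.injEq]
    constructor
    · rintro ⟨⟨hab, hpab, hMa⟩, hnq⟩
      have hAfa : A f a := (hmp a).mp hMa
      have hax : a ≠ x := fun h => hnAfx (h ▸ hAfa)
      by_cases hbx : b = x
      · subst hbx
        have : a = w := hMatching b a w ⟨Ne.symm hab.1, hab.2.2, hab.2.1⟩ hMxw
        exact ⟨this, rfl⟩
      · exfalso
        exact hnq ⟨hab, by rw [hqu a hax, hqu b hbx]; exact hpab, (hmq a).mpr hAfa⟩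
    · rintro ⟨rfl, rfl⟩
      refine ⟨⟨hMwx, hwx, (hmp _).mpr hAfw⟩, ?_⟩
      rintro ⟨-, hlt, -⟩
      rw [hqu _ hMwx.1, hqx] at hlt
      linarith
  have hQP : Q \ P = ∅ := by
    ext z
    obtain ⟨a, b⟩ := z
    simp only [hQ, hP, mem_sdiff, mem_filter, mem_univ, true_and, notMem_empty,
      iff_false]
    rintro ⟨⟨hab, hqab, hMa⟩, hnp⟩
    have hAfa : A f a := (hmq a).mp hMa
    have hax : a ≠ x := fun h => hnAfx (h ▸ hAfa)
    by_cases hbx : b = x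
    · subst hbx
      have haw : a = w := hMatching b a w ⟨Ne.symm hab.1, hab.2.2, hab.2.1⟩ hMxw
      have hax' : a ≠ b := hab.1
      rw [hqu a hax', hqx] at hqab
      rw [haw] at hqab
      linarith
    · rw [hqu a hax, hqu b hbx] at hqab
      exact hnp ⟨hab, hqab, (hmp a).mpr hAfa⟩
  have hswap := card_swap_aux P Q
  rw [hPQ, hQP] at hswap
  simp only [card_singleton, card_empty] at hswap
  have e1 : muQ A q = Q.card := by simp [muQ, hQ]
  have e2 : muQ A p = P.card := by simp [muQ, hP]
  rw [e1, e2]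
  omega

private lemma exists_opt [Fintype V] [Nonempty V] (A : V → V → Prop) :
    ∃ p : V → ℚ, Function.Injective p ∧
      (∀ p' : V → ℚ, Function.Injective p' → scQ A p' ≤ scQ A p) ∧
      (∀ p' : V → ℚ, Function.Injective p' → scQ A p' = scQ A p → muQ A p ≤ muQ A p') := by
  classical
  set S : Set ℕ := {s | ∃ p : V → ℚ, Function.Injective p ∧ scQ A p = s} with hS
  have hSne : S.Nonempty := by
    refine ⟨_, fun v => ((Fintype.equivFin V v : ℕ) : ℚ), ?_, rfl⟩
    intro a b hab
    have h2 : ((Fintype.equivFin V a : ℕ) : ℚ) = ((Fintype.equivFin V b : ℕ) : ℚ) := hab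
    have h3 : (Fintype.equivFin V a : ℕ) = (Fintype.equivFin V b : ℕ) := by exact_mod_cast h2
    exact (Fintype.equivFin V).injective (Fin.val_injective h3)
  have hbdd : BddAbove S := by
    refine ⟨Fintype.card (V × V), ?_⟩
    rintro s ⟨p, -, rfl⟩
    exact le_trans (Finset.card_filter_le _ _) (le_of_eq (Finset.card_univ))
  obtain ⟨p₀, hp₀, hs₀⟩ := Nat.sSup_mem hSne hbdd
  set T : Set ℕ := {m | ∃ p : V → ℚ, Function.Injective p ∧ scQ A p = sSup S ∧ muQ A p = m}
    with hT
  have hTne : T.Nonempty := ⟨muQ A p₀, p₀, hp₀, hs₀, rfl⟩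
  obtain ⟨p, hp, hpsc, hpmu⟩ := Nat.sInf_mem hTne
  refine ⟨p, hp, ?_, ?_⟩
  · intro p' hp'
    rw [hpsc]
    exact le_csSup hbdd ⟨p', hp', rfl⟩
  · intro p' hp' hsc'
    rw [hpmu]
    exact Nat.sInf_le ⟨p', hp', hsc'.trans hpsc, rfl⟩

open Finset in
/-- every digraph without digons missing a matching (each vertex
is non-adjacent to at most one other vertex) has a vertex with the SNP. -/
theorem digraph_missing_matching_SNP [Fintype V] [Nonempty V]
    (A : V → V → Prop) (hA : NoDigons A)
    (hMatching : ∀ v x y : V, MissingEdge A v x → MissingEdge A v y → x = y) :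
    ∃ v : V, SNP A v := by
  classical
  have hirr : ∀ u, ¬ A u u := fun u h => hA u u ⟨h, h⟩
  have hnd : ∀ u v, A u v → ¬ A v u := fun u v h h' => hA u v ⟨h, h'⟩
  obtain ⟨p, hp, hmax, hmin⟩ := exists_opt A
  obtain ⟨f, -, hf'⟩ := Finset.exists_max_image (univ : Finset V) p ⟨Classical.arbitrary V, mem_univ _⟩
  have hf : ∀ y, p y ≤ p f := fun y => hf' y (mem_univ y)
  refine ⟨f, ?_⟩
  set Fs : Finset V := univ.filter (fun u => A f u) with hFs
  set Gs : Finset V := univ.filter (fun u => u ∈ Npp A f) with hGs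
  set Sts : Finset V := univ.filter (fun u =>
    u = f ∨ (A u f ∧ u ∉ Npp A f) ∨ (MissingEdge A f u ∧ u ∉ Npp A f)) with hSts
  have hfSt : f ∈ Sts := mem_filter.mpr ⟨mem_univ f, Or.inl rfl⟩
  have huf : ∀ u : V, u ≠ f → p u < p f :=
    fun u hu => lt_of_le_of_ne (hf u) (fun h => hu (hp h))
  -- the next-stopper map
  have hstop0 : ∀ u : V, ∃ y : V, u ≠ f →
      ((y ∈ Sts ∧ p u < p y) ∧ ∀ z ∈ Sts, p u < p z → p y ≤ p z) := by
    intro u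
    by_cases hu : u = f
    · exact ⟨f, fun h => absurd hu h⟩
    · obtain ⟨y, hy, hymin⟩ := Finset.exists_min_image
        (Sts.filter fun z => p u < p z) p
        ⟨f, mem_filter.mpr ⟨hfSt, huf u hu⟩⟩
      obtain ⟨hy1, hy2⟩ := mem_filter.mp hy
      exact ⟨y, fun _ => ⟨⟨hy1, hy2⟩,
        fun z hz hpz => hymin z (mem_filter.mpr ⟨hz, hpz⟩)⟩⟩
  choose stp hstp using hstop0
  have hstpSt : ∀ u : V, u ≠ f → stp u ∈ Sts := fun u hu => ((hstp u hu).1).1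
  have hstpgt : ∀ u : V, u ≠ f → p u < p (stp u) := fun u hu => ((hstp u hu).1).2
  have hstpmin : ∀ u : V, u ≠ f → ∀ z ∈ Sts, p u < p z → p (stp u) ≤ p z :=
    fun u hu => (hstp u hu).2
  set Fib : V → Finset V := fun x =>
    univ.filter (fun u => u ∉ Sts ∧ p u < p x ∧ stp u = x) with hFib
  -- membership helpers
  have hFsmem : ∀ u ∈ Fs, u ∉ Sts ∧ u ≠ f := by
    intro u hu
    have hAfu : A f u := (mem_filter.mp hu).2
    have hune : u ≠ f := fun h => hirr f (h ▸ hAfu)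
    refine ⟨fun hSt => ?_, hune⟩
    rcases (mem_filter.mp hSt).2 with h | h | h
    · exact hune h
    · exact hnd f u hAfu h.1
    · exact h.1.2.1 hAfu
  have hGsmem : ∀ u ∈ Gs, u ∉ Sts ∧ u ≠ f := by
    intro u hu
    have hNppu : u ∈ Npp A f := (mem_filter.mp hu).2
    refine ⟨fun hSt => ?_, hNppu.1⟩
    rcases (mem_filter.mp hSt).2 with h | h | h
    · exact hNppu.1 h
    · exact h.2 hNppu
    · exact h.2 hNppu
  -- the key per-stopper inequality
  have key : ∀ x ∈ Sts,
      ((Fib x).filter (fun u => A f u)).card ≤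
        ((Fib x).filter (fun u => u ∈ Npp A f)).card := by
    intro x hx
    have hnAfx : ¬ A f x := by
      rcases (mem_filter.mp hx).2 with h | h | h
      · exact h ▸ hirr f
      · exact fun h' => hA x f ⟨h.1, h'⟩
      · exact h.1.2.1
    have hFibmem : ∀ u ∈ Fib x, u ∉ Sts ∧ p u < p x ∧ stp u = x :=
      fun u hu => (mem_filter.mp hu).2
    have hFibne : ∀ u ∈ Fib x, u ≠ f := by
      intro u hu h
      have := (hFibmem u hu).2.1
      rw [h] at this
      exact absurd (lt_of_lt_of_le this (hf x)) (lt_irrefl _)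
    have hFibFG : ∀ u ∈ Fib x, A f u ∨ u ∈ Npp A f := by
      intro u hu
      obtain ⟨huSt, hupx, -⟩ := hFibmem u hu
      have hune : u ≠ f := hFibne u hu
      by_cases h1 : A f u
      · exact Or.inl h1
      by_cases h2 : A u f
      · right
        by_contra h3
        exact huSt (mem_filter.mpr ⟨mem_univ u, Or.inr (Or.inl ⟨h2, h3⟩)⟩)
      · right
        by_contra h3
        exact huSt (mem_filter.mpr
          ⟨mem_univ u, Or.inr (Or.inr ⟨⟨Ne.symm hune, h1, h2⟩, h3⟩)⟩)
    -- separation: find t just below the fiber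
    have horder : ∀ u : V, p u < p x → u ∉ Fib x → ∀ v ∈ Fib x, p u < p v := by
      intro u hupx huF v hv
      obtain ⟨hvSt, hvpx, hvstp⟩ := hFibmem v hv
      have hvf : v ≠ f := hFibne v hv
      by_contra hcon
      push_neg at hcon
      have hvu : p v < p u := lt_of_le_of_ne hcon (fun h => huF (hp h ▸ hv))
      have hsplit : u ∈ Sts ∨ stp u ≠ x := by
        by_contra hc
        push_neg at hc
        exact huF (mem_filter.mpr ⟨mem_univ u, hc.1, hupx, hc.2⟩)
      have hxle : p x ≤ p f := hf x
      have hune : u ≠ f := fun h => by rw [h] at hupx; exact absurd (lt_of_lt_of_le hupx hxle) (lt_irrefl _)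
      rcases hsplit with huSt | hustp
      · have := hstpmin v hvf u huSt hvu
        rw [hvstp] at this
        linarith
      · by_cases huSt2 : u ∈ Sts
        · have := hstpmin v hvf u huSt2 hvu
          rw [hvstp] at this
          linarith
        · have h1 : stp u ∈ Sts := hstpSt u hune
          have h2 : p u < p (stp u) := hstpgt u hune
          have h3 : p (stp u) ≤ p x := hstpmin u hune x hx hupx
          have h4 : p (stp u) < p x := lt_of_le_of_ne h3 (fun h => hustp (hp h))
          have h5 : p v < p (stp u) := lt_trans hvu h2
          have := hstpmin v hvf (stp u) h1 h5
          rw [hvstp] at this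
          linarith
    obtain ⟨t, htL, htH⟩ := rat_sep
      ((univ.filter fun u => p u < p x ∧ u ∉ Fib x).image p)
      ((insert x (Fib x)).image p)
      ⟨p x, mem_image_of_mem p (mem_insert_self x (Fib x))⟩
      (by
        intro l hl h hh
        obtain ⟨u, hu, rfl⟩ := mem_image.mp hl
        obtain ⟨hu1, hu2⟩ := (mem_filter.mp hu).2
        obtain ⟨v, hv, rfl⟩ := mem_image.mp hh
        rcases mem_insert.mp hv with rfl | hv'
        · exact hu1
        · exact horder u hu1 hu2 v hv')
    have htx : t < p x := htH (p x) (mem_image_of_mem p (mem_insert_self x (Fib x)))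
    have htFib : ∀ v ∈ Fib x, t < p v :=
      fun v hv => htH (p v) (mem_image_of_mem p (mem_insert_of_mem hv))
    have htlow : ∀ u : V, p u < p x → u ∉ Fib x → p u < t :=
      fun u h1 h2 => htL (p u) (mem_image_of_mem p (mem_filter.mpr ⟨mem_univ u, h1, h2⟩))
    have ht : ∀ u, p u ≠ t := by
      intro u
      by_cases h1 : p u < p x
      · by_cases h2 : u ∈ Fib x
        · exact ne_of_gt (htFib u h2)
        · exact ne_of_lt (htlow u h1 h2)
      · push_neg at h1
        exact ne_of_gt (lt_of_lt_of_le htx h1)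
    have hcross : ∀ u : V, (t < p u ∧ p u < p x) ↔ u ∈ Fib x := by
      intro u
      constructor
      · rintro ⟨h1, h2⟩
        by_contra hn
        exact absurd (htlow u h2 hn) (by push_neg; linarith)
      · intro hv
        exact ⟨htFib u hv, (hFibmem u hv).2.1⟩
    have hqinj : Function.Injective (Function.update p x t) := by
      intro a b hab
      by_cases ha : a = x <;> by_cases hb : b = x
      · rw [ha, hb]
      · rw [ha] at hab ⊢
        rw [Function.update_self, Function.update_of_ne hb] at hab
        exact absurd hab.symm (ht b)
      · rw [hb] at hab ⊢
        rw [Function.update_self, Function.update_of_ne ha] at hab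
        exact absurd hab (ht a)
      · rw [Function.update_of_ne ha, Function.update_of_ne hb] at hab
        exact hp hab
    have hsc := score_update A p hp x t ht htx
    have hINset : (univ.filter fun u : V => A u x ∧ t < p u ∧ p u < p x)
        = (Fib x).filter (fun u => A u x) := by
      ext u
      simp only [mem_filter, mem_univ, true_and]
      constructor
      · rintro ⟨h1, h2⟩
        exact ⟨(hcross u).mp h2, h1⟩
      · rintro ⟨h1, h2⟩
        exact ⟨h2, (hcross u).mpr h1⟩
    have hOUTset : (univ.filter fun u : V => A x u ∧ t < p u ∧ p u < p x)
        = (Fib x).filter (fun u => A x u) := by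
      ext u
      simp only [mem_filter, mem_univ, true_and]
      constructor
      · rintro ⟨h1, h2⟩
        exact ⟨(hcross u).mp h2, h1⟩
      · rintro ⟨h1, h2⟩
        exact ⟨h2, (hcross u).mpr h1⟩
    rw [hINset, hOUTset] at hsc
    -- in-neighbors of the stopper inside the fiber are second neighbors
    have hINsub : ∀ u ∈ Fib x, A u x → u ∈ Npp A f := by
      intro u hu hux
      rcases hFibFG u hu with h | h
      · exfalso
        by_cases hxf2 : x = f
        · exact hA u f ⟨hxf2 ▸ hux, h⟩
        · have hxNpp : x ∈ Npp A f := ⟨hxf2, hnAfx, u, h, hux⟩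
          rcases (mem_filter.mp hx).2 with h' | h' | h'
          · exact hxf2 h'
          · exact h'.2 hxNpp
          · exact h'.2 hxNpp
      · exact h
    have hINsub' : (Fib x).filter (fun u => A u x) ⊆
        (Fib x).filter (fun u => u ∈ Npp A f) := by
      intro u hu
      obtain ⟨h1, h2⟩ := mem_filter.mp hu
      exact mem_filter.mpr ⟨h1, hINsub u h1 h2⟩
    by_cases hw : ∃ w, w ∈ Fib x ∧ A f w ∧ MissingEdge A x w
    · obtain ⟨w, hwFib, hAfw, hMxw⟩ := hw
      have hxnef : x ≠ f := fun h => (h ▸ hMxw : MissingEdge A f w).2.1 hAfw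
      have hwpx : p w < p x := (hFibmem w hwFib).2.1
      have htw : t < p w := htFib w hwFib
      have hmu := mu_update A hMatching p hp f hf x hxnef w hMxw t htw hwpx hAfw hnAfx ht
      have hstrict : ((Fib x).filter (fun u => A x u)).card + 1 ≤
          ((Fib x).filter (fun u => A u x)).card := by
        by_contra hcon
        push_neg at hcon
        have h1 : scQ A (Function.update p x t) ≤ scQ A p := hmax _ hqinj
        have h2 : scQ A (Function.update p x t) = scQ A p := by omega
        have h3 := hmin _ hqinj h2
        omega
      have hsub : (Fib x).filter (fun u => A f u) ⊆
          insert w ((Fib x).filter (fun u => A x u)) := by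
        intro u hu
        obtain ⟨huF, hAfu⟩ := mem_filter.mp hu
        by_cases huw : u = w
        · exact mem_insert.mpr (Or.inl huw)
        · refine mem_insert.mpr (Or.inr (mem_filter.mpr ⟨huF, ?_⟩))
          have hux : u ≠ x := fun h => absurd ((hFibmem u huF).2.1) (h ▸ lt_irrefl _)
          have hnm : ¬ MissingEdge A x u := fun hm => huw (hMatching x u w hm hMxw)
          have hnux : ¬ A u x := by
            intro h'
            exact ((hINsub u huF h') : u ∈ Npp A f).2.1 hAfu
          by_contra hnxu
          exact hnm ⟨Ne.symm hux, hnxu, hnux⟩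
      calc ((Fib x).filter (fun u => A f u)).card
          ≤ (insert w ((Fib x).filter (fun u => A x u))).card := card_le_card hsub
        _ ≤ ((Fib x).filter (fun u => A x u)).card + 1 := card_insert_le _ _
        _ ≤ ((Fib x).filter (fun u => A u x)).card := hstrict
        _ ≤ ((Fib x).filter (fun u => u ∈ Npp A f)).card := card_le_card hINsub'
    · have hsub : (Fib x).filter (fun u => A f u) ⊆
          (Fib x).filter (fun u => A x u) := by
        intro u hu
        obtain ⟨huF, hAfu⟩ := mem_filter.mp hu
        refine mem_filter.mpr ⟨huF, ?_⟩
        have hux : u ≠ x := fun h => absurd ((hFibmem u huF).2.1) (h ▸ lt_irrefl _)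
        have hnm : ¬ MissingEdge A x u := fun hm => hw ⟨u, huF, hAfu, hm⟩
        have hnux : ¬ A u x := by
          intro h'
          exact ((hINsub u huF h') : u ∈ Npp A f).2.1 hAfu
        by_contra hnxu
        exact hnm ⟨Ne.symm hux, hnxu, hnux⟩
      have hle : ((Fib x).filter (fun u => A x u)).card ≤
          ((Fib x).filter (fun u => A u x)).card := by
        have h1 : scQ A (Function.update p x t) ≤ scQ A p := hmax _ hqinj
        omega
      calc ((Fib x).filter (fun u => A f u)).card
          ≤ ((Fib x).filter (fun u => A x u)).card := card_le_card hsub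
        _ ≤ ((Fib x).filter (fun u => A u x)).card := hle
        _ ≤ ((Fib x).filter (fun u => u ∈ Npp A f)).card := card_le_card hINsub'
  -- fiberwise decomposition
  have hFfib : ∀ x ∈ Sts, Fs.filter (fun u => stp u = x) = (Fib x).filter (fun u => A f u) := by
    intro x hx
    ext u
    simp only [mem_filter, mem_univ, true_and, hFs, hFib]
    constructor
    · rintro ⟨hAfu, hstpu⟩
      have h1 := hFsmem u (mem_filter.mpr ⟨mem_univ u, hAfu⟩)
      refine ⟨⟨h1.1, ?_, hstpu⟩, hAfu⟩
      rw [← hstpu]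
      exact hstpgt u h1.2
    · rintro ⟨⟨-, -, hstpu⟩, hAfu⟩
      exact ⟨hAfu, hstpu⟩
  have hGfib : ∀ x ∈ Sts, Gs.filter (fun u => stp u = x) = (Fib x).filter (fun u => u ∈ Npp A f) := by
    intro x hx
    ext u
    simp only [mem_filter, mem_univ, true_and, hGs, hFib]
    constructor
    · rintro ⟨hNu, hstpu⟩
      have h1 := hGsmem u (mem_filter.mpr ⟨mem_univ u, hNu⟩)
      refine ⟨⟨h1.1, ?_, hstpu⟩, hNu⟩
      rw [← hstpu]
      exact hstpgt u h1.2
    · rintro ⟨⟨-, -, hstpu⟩, hNu⟩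
      exact ⟨hNu, hstpu⟩
  have hFsum : Fs.card = ∑ x ∈ Sts, (Fs.filter (fun u => stp u = x)).card :=
    card_eq_sum_card_fiberwise (fun u hu => hstpSt u (hFsmem u hu).2)
  have hGsum : Gs.card = ∑ x ∈ Sts, (Gs.filter (fun u => stp u = x)).card :=
    card_eq_sum_card_fiberwise (fun u hu => hstpSt u (hGsmem u hu).2)
  have hcard : Fs.card ≤ Gs.card := by
    rw [hFsum, hGsum]
    refine Finset.sum_le_sum ?_
    intro x hx
    rw [hFfib x hx, hGfib x hx]
    exact key x hx
  -- conclude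
  have hNp : Nplus A f = (Fs : Set V) := by
    ext u
    simp [Nplus, hFs]
  have hNpp2 : Npp A f = (Gs : Set V) := by
    ext u
    simp [hGs]
  unfold SNP
  rw [hNp, hNpp2, Set.ncard_coe_finset, Set.ncard_coe_finset]
  exact hcard
end
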